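/- Let a ∈ ℝ, b > 0, c = a/b and c₀ < 0, and let ρ(x,t) = ρ¹(x,t) + ρ²(x,t) + ρ³(x,t) be the explicit solution defined below. Then for all x > 0 and t > 0, ∂_t ρ(x,t) + a ∂_x ρ(x,t) − b ∂_xx ρ(x,t) = 0, and for all t > 0 the no-flux boundary condition a ρ(0,t) − b ∂_x ρ(0,t) = 0 holds. -/

import Mathlib

open MeasureTheory Set Filter Topology

/-- The standard normal cumulative distribution function `Φ`. -/
noncomputable def stdNormalCdf (z : ℝ) : ℝ :=
  ∫ x in Iic z, (Real.sqrt (2 * Real.pi))⁻¹ * Real.exp (-x ^ 2 / 2)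

/-- First part `ρ¹` of the explicit solution (with `c = a/b`, `σ = √(2bt)`). -/
noncomputable def explRho1 (a b c₀ : ℝ) (x t : ℝ) : ℝ :=
  -c₀ * Real.exp (c₀ * (c₀ * b * t + x - a * t)) *
    stdNormalCdf ((2 * c₀ * b * t + x - a * t) / Real.sqrt (2 * b * t))

/-- Second part `ρ²` of the explicit solution (with `d = c₀ − a/b`). -/
noncomputable def explRho2 (a b c₀ : ℝ) (x t : ℝ) : ℝ :=
  -c₀ * Real.exp ((c₀ - a / b) * ((c₀ - a / b) * b * t - x + a * t)) *
    stdNormalCdf ((2 * (c₀ - a / b) * b * t - x + a * t) / Real.sqrt (2 * b * t))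

/-- Third part `ρ³` of the explicit solution (with `c = a/b`). -/
noncomputable def explRho3 (a b c₀ : ℝ) (x t : ℝ) : ℝ :=
  -(a / b) * Real.exp ((a / b) * x) *
      stdNormalCdf (-(x + a * t) / Real.sqrt (2 * b * t))
  + (a / b) * Real.exp ((a / b) * x) * Real.exp (c₀ * (c₀ * b * t - x - a * t)) *
      stdNormalCdf ((2 * c₀ * b * t - x - a * t) / Real.sqrt (2 * b * t))

/-- The explicit solution `ρ = ρ¹ + ρ² + ρ³` of the Smoluchowski equation on the
half-line with exponential initial datum `ρ₀(x) = −c₀ e^{c₀ x}`. -/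
noncomputable def explRho (a b c₀ : ℝ) (x t : ℝ) : ℝ :=
  explRho1 a b c₀ x t + explRho2 a b c₀ x t + explRho3 a b c₀ x t

/-!
Each of the four terms of `ρ` has the form `K e^{αx + α(bα - a)t} Φ(γ(x + (2bα - a)t)/√(2bt))`
with `γ = ±1`: an exponential solution `e^{αx + α(bα - a)t}` of `ρ_t + aρ_x - bρ_xx = 0` times a
heat-kernel front travelling with the velocity `a - 2bα` that the exponential factor induces. The
`Φ`-terms of the equation cancel by the choice of the growth rate `α(bα - a)` and the Gaussian
terms cancel because `γ² = 1`, so each term, and by linearity `ρ`, is a solution.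

For the no-flux condition, the fronts with parameters `(α, γ)` and `(a/b - α, -γ)` have the same
exponential factor and the same argument of `Φ` at `x = 0`, and `e^{α(bα - a)t} Φ'(q(0, t))`
does not depend on `α`. With these identities the flux `aρ - bρ_x` at `x = 0` reduces to a
multiple of `b (a/b) - a = 0`.
-/

open Real

theorem hasDerivAt_integral_Iic {f : ℝ → ℝ} (hf : Continuous f) (hfi : Integrable f) (x : ℝ) :
    HasDerivAt (fun y => ∫ s in Iic y, f s) (f x) x := by
  have h : (fun y => ∫ s in Iic y, f s)
      = fun y => (∫ s in Iic 0, f s) + ∫ s in (0 : ℝ)..y, f s := by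
    funext y
    rw [← intervalIntegral.integral_Iic_sub_Iic hfi.integrableOn hfi.integrableOn]
    ring
  rw [h]
  exact (hf.integral_hasStrictDerivAt 0 x).hasDerivAt.const_add _

noncomputable def stdNormalPdf (z : ℝ) : ℝ :=
  (√(2 * π))⁻¹ * exp (-z ^ 2 / 2)

theorem integrable_stdNormalPdf : Integrable stdNormalPdf := by
  refine ((integrable_exp_neg_mul_sq (b := 1 / 2) (by norm_num)).const_mul (√(2 * π))⁻¹).congr ?_
  filter_upwards with x
  simp only [stdNormalPdf]
  ring_nf

theorem hasDerivAt_stdNormalCdf (z : ℝ) : HasDerivAt stdNormalCdf (stdNormalPdf z) z :=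
  hasDerivAt_integral_Iic (f := stdNormalPdf) (by unfold stdNormalPdf; fun_prop)
    integrable_stdNormalPdf z

theorem hasDerivAt_stdNormalPdf (z : ℝ) : HasDerivAt stdNormalPdf (-z * stdNormalPdf z) z := by
  have h : HasDerivAt (fun z : ℝ => -z ^ 2 / 2) (-z) z :=
    ((hasDerivAt_pow 2 z).neg.div_const 2).congr_deriv (by ring)
  exact (h.exp.const_mul (√(2 * π))⁻¹).congr_deriv (by rw [stdNormalPdf]; ring)

noncomputable def driftDiffusionOp (a b : ℝ) (u : ℝ → ℝ → ℝ) (x t : ℝ) : ℝ :=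
  deriv (fun τ => u x τ) t + a * deriv (fun ξ => u ξ t) x - b * deriv (deriv fun ξ => u ξ t) x

theorem driftDiffusionOp_sum_eq_zero {ι : Type*} (s : Finset ι) {a b x t : ℝ}
    {u : ι → ℝ → ℝ → ℝ} {u' : ι → ℝ → ℝ} {u'' uₜ : ι → ℝ}
    (hx : ∀ i ∈ s, ∀ ξ, HasDerivAt (fun ξ => u i ξ t) (u' i ξ) ξ)
    (hxx : ∀ i ∈ s, HasDerivAt (u' i) (u'' i) x)
    (ht : ∀ i ∈ s, HasDerivAt (fun τ => u i x τ) (uₜ i) t)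
    (hpde : ∀ i ∈ s, uₜ i + a * u' i x - b * u'' i = 0) :
    driftDiffusionOp a b (fun x t => ∑ i ∈ s, u i x t) x t = 0 := by
  have hd : deriv (fun ξ => ∑ i ∈ s, u i ξ t) = fun ξ => ∑ i ∈ s, u' i ξ :=
    funext fun ξ => (HasDerivAt.fun_sum fun i hi => hx i hi ξ).deriv
  rw [driftDiffusionOp, hd, (HasDerivAt.fun_sum ht).deriv, (HasDerivAt.fun_sum hxx).deriv,
    Finset.mul_sum, Finset.mul_sum, ← Finset.sum_add_distrib, ← Finset.sum_sub_distrib]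
  exact Finset.sum_eq_zero hpde

section Front

variable (a b : ℝ)

noncomputable def frontArg (α γ x t : ℝ) : ℝ :=
  γ * (x + (2 * b * α - a) * t) / √(2 * b * t)

noncomputable def front (K α γ x t : ℝ) : ℝ :=
  K * exp (α * x + α * (b * α - a) * t) * stdNormalCdf (frontArg a b α γ x t)

noncomputable def frontDx (K α γ x t : ℝ) : ℝ :=
  K * exp (α * x + α * (b * α - a) * t) *
    (α * stdNormalCdf (frontArg a b α γ x t)
      + γ / √(2 * b * t) * stdNormalPdf (frontArg a b α γ x t))

noncomputable def frontDxx (K α γ x t : ℝ) : ℝ :=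
  K * exp (α * x + α * (b * α - a) * t) *
    (α ^ 2 * stdNormalCdf (frontArg a b α γ x t)
      + (2 * α - frontArg a b α γ x t * γ / √(2 * b * t)) * (γ / √(2 * b * t))
        * stdNormalPdf (frontArg a b α γ x t))

noncomputable def frontDt (K α γ x t : ℝ) : ℝ :=
  K * exp (α * x + α * (b * α - a) * t) *
    (α * (b * α - a) * stdNormalCdf (frontArg a b α γ x t)
      + (γ * (2 * b * α - a) / √(2 * b * t) - frontArg a b α γ x t / (2 * t))
        * stdNormalPdf (frontArg a b α γ x t))

variable {a b} {K α γ x t : ℝ}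

theorem hasDerivAt_frontArg_x :
    HasDerivAt (fun ξ => frontArg a b α γ ξ t) (γ / √(2 * b * t)) x := by
  simpa [frontArg] using
    (((hasDerivAt_id x).add_const ((2 * b * α - a) * t)).const_mul γ).div_const √(2 * b * t)

theorem hasDerivAt_frontArg_t (hb : 0 < b) (ht : 0 < t) :
    HasDerivAt (fun τ => frontArg a b α γ x τ)
      (γ * (2 * b * α - a) / √(2 * b * t) - frontArg a b α γ x t / (2 * t)) t := by
  have hbt : 0 < 2 * b * t := by positivity
  have hσ : 0 < √(2 * b * t) := sqrt_pos.mpr hbt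
  have hnum : HasDerivAt (fun τ => γ * (x + (2 * b * α - a) * τ)) (γ * (2 * b * α - a)) t := by
    simpa using (((hasDerivAt_id t).const_mul (2 * b * α - a)).const_add x).const_mul γ
  have hden : HasDerivAt (fun τ => √(2 * b * τ)) (2 * b / (2 * √(2 * b * t))) t := by
    simpa using ((hasDerivAt_id t).const_mul (2 * b)).sqrt hbt.ne'
  refine (hnum.div hden hσ.ne').congr_deriv ?_
  have hσ2 : √(2 * b * t) ^ 2 = 2 * b * t := sq_sqrt hbt.le
  rw [frontArg]
  field_simp
  rw [hσ2]
  ring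

theorem hasDerivAt_exp_gauge_x :
    HasDerivAt (fun ξ => exp (α * ξ + α * (b * α - a) * t))
      (exp (α * x + α * (b * α - a) * t) * α) x := by
  simpa using (((hasDerivAt_id x).const_mul α).add_const (α * (b * α - a) * t)).exp

theorem hasDerivAt_front_x :
    HasDerivAt (fun ξ => front a b K α γ ξ t) (frontDx a b K α γ x t) x := by
  have hE := hasDerivAt_exp_gauge_x (a := a) (b := b) (α := α) (x := x) (t := t)
  have hq : HasDerivAt (fun ξ => frontArg a b α γ ξ t) _ x := hasDerivAt_frontArg_x
  refine ((hE.const_mul K).mul ((hasDerivAt_stdNormalCdf _).comp x hq)).congr_deriv ?_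
  simp only [frontDx, Function.comp_apply]
  ring

theorem hasDerivAt_frontDx_x :
    HasDerivAt (fun ξ => frontDx a b K α γ ξ t) (frontDxx a b K α γ x t) x := by
  have hE := hasDerivAt_exp_gauge_x (a := a) (b := b) (α := α) (x := x) (t := t)
  have hq : HasDerivAt (fun ξ => frontArg a b α γ ξ t) _ x := hasDerivAt_frontArg_x
  have hΦ := (hasDerivAt_stdNormalCdf _).comp x hq
  have hφ := (hasDerivAt_stdNormalPdf _).comp x hq
  refine ((hE.const_mul K).mul
    ((hΦ.const_mul α).add (hφ.const_mul (γ / √(2 * b * t))))).congr_deriv ?_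
  simp only [frontDxx, Pi.add_apply, Function.comp_apply]
  ring

theorem hasDerivAt_front_t (hb : 0 < b) (ht : 0 < t) :
    HasDerivAt (fun τ => front a b K α γ x τ) (frontDt a b K α γ x t) t := by
  have hE : HasDerivAt (fun τ => exp (α * x + α * (b * α - a) * τ))
      (exp (α * x + α * (b * α - a) * t) * (α * (b * α - a))) t := by
    simpa using (((hasDerivAt_id t).const_mul (α * (b * α - a))).const_add (α * x)).exp
  have hq : HasDerivAt (fun τ => frontArg a b α γ x τ) _ t := hasDerivAt_frontArg_t hb ht
  refine ((hE.const_mul K).mul ((hasDerivAt_stdNormalCdf _).comp t hq)).congr_deriv ?_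
  simp only [frontDt, Function.comp_apply]
  ring

theorem frontDt_add_mul_frontDx_sub_mul_frontDxx (hb : 0 < b) (ht : 0 < t) (hγ : γ ^ 2 = 1) :
    frontDt a b K α γ x t + a * frontDx a b K α γ x t - b * frontDxx a b K α γ x t = 0 := by
  have hσ : b / √(2 * b * t) ^ 2 = 1 / (2 * t) := by
    rw [sq_sqrt (by positivity)]
    field_simp
  simp only [frontDt, frontDx, frontDxx]
  set E := exp (α * x + α * (b * α - a) * t)
  set q := frontArg a b α γ x t
  linear_combination (K * E * stdNormalPdf q * q * γ ^ 2) * hσ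
    + (K * E * stdNormalPdf q * q / (2 * t)) * hγ

end Front

section Decomposition

variable {a b c₀ x t : ℝ}

theorem explRho1_eq_front : explRho1 a b c₀ x t = front a b (-c₀) c₀ 1 x t := by
  rw [explRho1, front, frontArg]
  congr 3 <;> ring

theorem explRho2_eq_front (hb : b ≠ 0) :
    explRho2 a b c₀ x t = front a b (-c₀) (a / b - c₀) (-1) x t := by
  rw [explRho2, front, frontArg]
  congr 3 <;> (field_simp; ring)

theorem explRho3_eq_front_add_front (hb : b ≠ 0) :
    explRho3 a b c₀ x t =
      front a b (-(a / b)) (a / b) (-1) x t + front a b (a / b) (a / b - c₀) (-1) x t := by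
  rw [explRho3, front, front, frontArg, frontArg, mul_assoc (a / b), ← exp_add,
    mul_div_cancel₀ a hb, sub_self, mul_zero, zero_mul, add_zero]
  congr 3
  · field_simp
    ring
  · congr 1
    field_simp
    ring
  · field_simp
    ring

theorem explRho_eq_sum_front (hb : b ≠ 0) :
    explRho a b c₀ = fun x t => ∑ i : Fin 4,
      front a b (![-c₀, -c₀, -(a / b), a / b] i) (![c₀, a / b - c₀, a / b, a / b - c₀] i)
        (![1, -1, -1, -1] i) x t := by
  funext x t
  simp [Fin.sum_univ_four, explRho, explRho1_eq_front, explRho2_eq_front hb,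
    explRho3_eq_front_add_front hb, add_assoc]

end Decomposition

section Boundary

variable {a b α γ t : ℝ}

theorem exponent_mirror (hb : b ≠ 0) : (a / b - α) * (b * (a / b - α) - a) = α * (b * α - a) := by
  field_simp
  ring

theorem frontArg_mirror (hb : b ≠ 0) :
    frontArg a b (a / b - α) (-γ) 0 t = frontArg a b α γ 0 t := by
  rw [frontArg, frontArg]
  field_simp
  ring

theorem exp_mul_stdNormalPdf_frontArg_zero (hb : 0 < b) (ht : 0 < t) (hγ : γ ^ 2 = 1) :
    exp (α * (b * α - a) * t) * stdNormalPdf (frontArg a b α γ 0 t)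
      = stdNormalPdf (a * t / √(2 * b * t)) := by
  rw [stdNormalPdf, stdNormalPdf, frontArg, mul_left_comm, ← exp_add, div_pow, div_pow,
    sq_sqrt (by positivity)]
  congr 2
  field_simp
  linear_combination -(2 * b * α - a) ^ 2 * t ^ 2 * hγ

end Boundary

theorem explRho_flux_eq_zero {a b c₀ t : ℝ} (hb : 0 < b) (ht : 0 < t) :
    a * explRho a b c₀ 0 t - b * deriv (fun ξ => explRho a b c₀ ξ t) 0 = 0 := by
  rw [explRho_eq_sum_front hb.ne', (HasDerivAt.fun_sum fun i _ => hasDerivAt_front_x).deriv]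
  simp only [Fin.sum_univ_four, Matrix.cons_val_zero, Matrix.cons_val_one, Matrix.cons_val_two,
    Matrix.cons_val_three, Matrix.head_cons, Matrix.tail_cons, front, frontDx, mul_zero, zero_add]
  rw [exponent_mirror hb.ne', frontArg_mirror hb.ne']
  have key₁ := exp_mul_stdNormalPdf_frontArg_zero (a := a) (α := c₀) hb ht (one_pow 2)
  have key₃ :=
    exp_mul_stdNormalPdf_frontArg_zero (a := a) (α := a / b) (γ := -1) hb ht (by norm_num)
  set c := a / b
  have hc : b * c = a := mul_div_cancel₀ a hb.ne'
  set E₁ := exp (c₀ * (b * c₀ - a) * t)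
  set E₃ := exp (c * (b * c - a) * t)
  linear_combination (b * c / √(2 * b * t)) * (key₁ - key₃)
    + (E₁ * stdNormalCdf (frontArg a b c₀ 1 0 t) * (2 * c₀ - c)
      + E₃ * stdNormalCdf (frontArg a b c (-1) 0 t) * c) * hc

theorem stmt_10_general (a b c₀ : ℝ) (hb : 0 < b) :
    (∀ x > (0:ℝ), ∀ t > (0:ℝ),
      deriv (fun τ => explRho a b c₀ x τ) t
        + a * deriv (fun ξ => explRho a b c₀ ξ t) x
        - b * deriv (deriv (fun ξ => explRho a b c₀ ξ t)) x = 0) ∧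
    (∀ t > (0:ℝ),
      a * explRho a b c₀ 0 t - b * deriv (fun ξ => explRho a b c₀ ξ t) 0 = 0) := by
  refine ⟨fun x _ t ht => ?_, fun t ht => explRho_flux_eq_zero hb ht⟩
  change driftDiffusionOp a b (explRho a b c₀) x t = 0
  rw [explRho_eq_sum_front hb.ne']
  refine driftDiffusionOp_sum_eq_zero Finset.univ (fun i _ ξ => hasDerivAt_front_x)
    (fun i _ => hasDerivAt_frontDx_x) (fun i _ => hasDerivAt_front_t hb ht)
    fun i _ => frontDt_add_mul_frontDx_sub_mul_frontDxx hb ht ?_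
  fin_cases i <;> norm_num

/-- The explicit solution satisfies the drift-diffusion PDE for `x > 0`, `t > 0`
and the no-flux boundary condition at `x = 0` for all `t > 0`. -/
theorem stmt_10 (a b c₀ : ℝ) (hb : 0 < b) (hc₀ : c₀ < 0) :
    (∀ x > (0:ℝ), ∀ t > (0:ℝ),
      deriv (fun τ => explRho a b c₀ x τ) t
        + a * deriv (fun ξ => explRho a b c₀ ξ t) x
        - b * deriv (deriv (fun ξ => explRho a b c₀ ξ t)) x = 0) ∧
    (∀ t > (0:ℝ),
      a * explRho a b c₀ 0 t - b * deriv (fun ξ => explRho a b c₀ ξ t) 0 = 0) :=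
  stmt_10_general a b c₀ hb
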